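/- Let 0 ≤ α < 1 and take p(z) = (1 + (1 − 2α)z)/(1 − z), so that p₁ = p₂ = 2(1 − α). Under the spirallike-convex subordination hypothesis with this p, for every complex number μ one has |a₃ − μ·a₂²| ≤ (10·|b|·(1 − α)/(|ϱ|·[3]_q)) · max{ 1, | 1 + 2·b·(1 − α)·(5·[2]_q² − 9·μ·[3]_q)/(5·ϱ·[2]_q²) | }. -/

import Mathlib

/-!
Write `D = D_qF = 1 + [2]_q A₂ z + [3]_q A₃ z² + ⋯` with `A₂ = -a₂/3`, `A₃ = a₃/10`, and
`w = c₁ z + c₂ z² + ⋯`. Clearing denominators, the subordination becomes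
`ϱ z D'(z) (1 - w(z)) = K D(z) w(z)` with `K = 2b(1 - α)`. Comparing the coefficients of `z` and
`z²` expresses `a₂`, `a₃` through `c₁`, `c₂` and gives
`a₃ - μ a₂² = 5K / (ϱ [3]_q) · (c₂ + t c₁²)` with `t` the quantity inside the maximum.
The Schwarz–Pick lemma applied to `w(z)/z` gives `|c₁| ≤ 1` and `|c₂| ≤ 1 - |c₁|²`, so
`|c₂ + t c₁²| ≤ (1 - |c₁|²) + |t| |c₁|² ≤ max 1 |t|`.
-/

open Metric Set Filter Topology Complex ComplexConjugate FormalMultilinearSeries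

lemma normSq_one_sub_conj_mul_sub_normSq_sub (a ζ : ℂ) :
    normSq (1 - conj a * ζ) - normSq (ζ - a) = (1 - normSq a) * (1 - normSq ζ) := by
  simp only [normSq_apply, sub_re, sub_im, mul_re, mul_im, one_re, one_im, conj_re, conj_im]
  ring

lemma norm_sub_le_norm_one_sub_conj_mul {a ζ : ℂ} (ha : ‖a‖ ≤ 1) (hζ : ‖ζ‖ ≤ 1) :
    ‖ζ - a‖ ≤ ‖1 - conj a * ζ‖ := by
  have key := normSq_one_sub_conj_mul_sub_normSq_sub a ζ
  rw [← sq_le_sq₀ (norm_nonneg _) (norm_nonneg _), ← normSq_eq_norm_sq, ← normSq_eq_norm_sq]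
  rw [← sq_le_one_iff₀ (norm_nonneg _), ← normSq_eq_norm_sq] at ha hζ
  nlinarith

lemma one_sub_conj_mul_ne_zero {a ζ : ℂ} (ha : ‖a‖ < 1) (hζ : ‖ζ‖ ≤ 1) : 1 - conj a * ζ ≠ 0 := by
  refine sub_ne_zero.mpr fun h => ?_
  have : ‖conj a * ζ‖ < 1 := by
    rw [norm_mul, norm_conj]
    exact mul_lt_one_of_nonneg_of_lt_one_left (norm_nonneg _) ha hζ
  rw [← h, norm_one] at this
  exact this.false

lemma deriv_zero_eq_zero_of_norm_eq_one {g : ℂ → ℂ} (hg : DifferentiableOn ℂ g (ball 0 1))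
    (hmaps : MapsTo g (ball 0 1) (closedBall 0 1)) (ha : ‖g 0‖ = 1) : deriv g 0 = 0 := by
  have h0 : (0 : ℂ) ∈ ball (0 : ℂ) 1 := mem_ball_self one_pos
  have hmax : IsLocalMax (norm ∘ g) 0 := by
    refine IsMaxOn.isLocalMax (fun z hz => ?_) (isOpen_ball.mem_nhds h0)
    change ‖g z‖ ≤ ‖g 0‖
    exact ha ▸ mem_closedBall_zero_iff.mp (hmaps hz)
  have hconst : g =ᶠ[𝓝 0] fun _ => g 0 := eventually_eq_of_isLocalMax_norm
    (eventually_of_mem (isOpen_ball.mem_nhds h0) fun z hz =>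
      hg.differentiableAt (isOpen_ball.mem_nhds hz)) hmax
  rw [hconst.deriv_eq, deriv_const]

-- Compose `g` with the disc automorphism `ζ ↦ (ζ - a) / (1 - conj a * ζ)`, `a = g 0`, and apply
-- the Schwarz lemma.
lemma norm_deriv_zero_le_one_sub_sq_of_norm_lt_one {g : ℂ → ℂ}
    (hg : DifferentiableOn ℂ g (ball 0 1)) (hmaps : MapsTo g (ball 0 1) (closedBall 0 1))
    (ha : ‖g 0‖ < 1) : ‖deriv g 0‖ ≤ 1 - ‖g 0‖ ^ 2 := by
  have h0 : (0 : ℂ) ∈ ball (0 : ℂ) 1 := mem_ball_self one_pos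
  set a := g 0
  have hden (z : ℂ) (hz : z ∈ ball (0 : ℂ) 1) : 1 - conj a * g z ≠ 0 :=
    one_sub_conj_mul_ne_zero ha (mem_closedBall_zero_iff.mp (hmaps hz))
  set h : ℂ → ℂ := fun z => (g z - a) / (1 - conj a * g z)
  have hh : DifferentiableOn ℂ h (ball 0 1) :=
    (hg.sub_const a).div ((differentiableOn_const _).sub (hg.const_mul _)) hden
  have hmaps_h : MapsTo h (ball 0 1) (closedBall (h 0) 1) := by
    intro z hz
    simp only [h, a, sub_self, zero_div, mem_closedBall_zero_iff, norm_div]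
    exact div_le_one_of_le₀ (norm_sub_le_norm_one_sub_conj_mul ha.le
      (mem_closedBall_zero_iff.mp (hmaps hz))) (norm_nonneg _)
  have hga : HasDerivAt g (deriv g 0) 0 :=
    (hg.differentiableAt (isOpen_ball.mem_nhds h0)).hasDerivAt
  have hderiv : deriv h 0 * (1 - conj a * a) = deriv g 0 := by
    rw [((hga.sub_const a).fun_div ((hga.const_mul (conj a)).const_sub 1) (hden 0 h0)).deriv]
    field_simp [hden 0 h0]
    ring
  have hnorm : ‖(1 : ℂ) - conj a * a‖ = 1 - ‖a‖ ^ 2 := by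
    rw [mul_comm, mul_conj, normSq_eq_norm_sq, ← ofReal_one, ← ofReal_sub, norm_real,
      Real.norm_of_nonneg (by nlinarith [norm_nonneg a])]
  rw [← hderiv, norm_mul, hnorm]
  exact mul_le_of_le_one_left (by nlinarith [norm_nonneg a])
    (norm_deriv_le_one_of_mapsTo_ball hh hmaps_h one_pos)

theorem norm_deriv_zero_le_one_sub_sq {g : ℂ → ℂ} (hg : DifferentiableOn ℂ g (ball 0 1))
    (hmaps : MapsTo g (ball 0 1) (closedBall 0 1)) :
    ‖deriv g 0‖ ≤ 1 - ‖g 0‖ ^ 2 := by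
  rcases (mem_closedBall_zero_iff.mp (hmaps (mem_ball_self one_pos))).eq_or_lt with ha | ha
  · rw [deriv_zero_eq_zero_of_norm_eq_one hg hmaps ha, ha]
    norm_num
  · exact norm_deriv_zero_le_one_sub_sq_of_norm_lt_one hg hmaps ha

lemma iteratedDeriv_two_eq_two_mul_deriv_dslope {w : ℂ → ℂ} {s : Set ℂ} (hs : s ∈ 𝓝 0)
    (hw : DifferentiableOn ℂ w s) (hw0 : w 0 = 0) :
    iteratedDeriv 2 w 0 = 2 * deriv (dslope w 0) 0 := by
  have hg : ContDiffAt ℂ 2 (dslope w 0) 0 :=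
    (((differentiableOn_dslope hs).mpr hw).analyticAt hs).contDiffAt
  have hw_eq : w = fun z => z * dslope w 0 z := by
    ext z
    simpa [hw0] using (sub_smul_dslope w 0 z).symm
  conv_lhs => rw [hw_eq]
  rw [iteratedDeriv_fun_mul (by fun_prop) hg]
  simp [iteratedDeriv_fun_id_zero]

lemma norm_add_mul_sq_le_max {c₁ c₂ t : ℂ} (h₁ : ‖c₁‖ ≤ 1) (h₂ : ‖c₂‖ ≤ 1 - ‖c₁‖ ^ 2) :
    ‖c₂ + t * c₁ ^ 2‖ ≤ max 1 ‖t‖ := by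
  have hs : ‖c₁‖ ^ 2 ≤ 1 := by nlinarith [norm_nonneg c₁]
  calc ‖c₂ + t * c₁ ^ 2‖ ≤ ‖c₂‖ + ‖t‖ * ‖c₁‖ ^ 2 := by
        rw [← norm_pow, ← norm_mul]
        exact norm_add_le _ _
    _ ≤ (1 - ‖c₁‖ ^ 2) * max 1 ‖t‖ + ‖c₁‖ ^ 2 * max 1 ‖t‖ := by
        nlinarith [le_max_left 1 ‖t‖, le_max_right 1 ‖t‖, sq_nonneg ‖c₁‖]
    _ = max 1 ‖t‖ := by ring

theorem norm_iteratedDeriv_two_div_two_add_mul_deriv_sq_le {w : ℂ → ℂ}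
    (hw : DifferentiableOn ℂ w (ball 0 1)) (hw0 : w 0 = 0)
    (hmaps : MapsTo w (ball 0 1) (ball 0 1)) (t : ℂ) :
    ‖iteratedDeriv 2 w 0 / 2 + t * deriv w 0 ^ 2‖ ≤ max 1 ‖t‖ := by
  have hball : ball (0 : ℂ) 1 ∈ 𝓝 0 := ball_mem_nhds 0 one_pos
  have hg : DifferentiableOn ℂ (dslope w 0) (ball 0 1) :=
    (differentiableOn_dslope hball).mpr hw
  have hg_maps : MapsTo (dslope w 0) (ball 0 1) (closedBall 0 1) := fun z hz => by
    simpa using norm_dslope_le_div_of_mapsTo_ball hw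
      (by rw [hw0]; exact hmaps.mono_right ball_subset_closedBall) hz
  rw [iteratedDeriv_two_eq_two_mul_deriv_dslope hball hw hw0, ← dslope_same w (0 : ℂ),
    mul_div_cancel_left₀ _ two_ne_zero]
  exact norm_add_mul_sq_le_max (by simpa using hg_maps (mem_ball_self one_pos))
    (norm_deriv_zero_le_one_sub_sq hg hg_maps)

lemma iteratedDeriv_id_mul_deriv_zero {D : ℂ → ℂ} (hD : AnalyticAt ℂ D 0) (n : ℕ) :
    iteratedDeriv n (fun z => z * deriv D z) 0 = n * iteratedDeriv n D 0 := by
  rw [iteratedDeriv_fun_mul (by fun_prop) hD.deriv.contDiffAt]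
  rcases n with _ | n
  · simp
  · rw [Finset.sum_eq_single 1]
    · simp [iteratedDeriv_fun_id_zero, ← iteratedDeriv_succ']
    · intro i _ hi
      simp [iteratedDeriv_fun_id_zero, hi]
    · simp

theorem deriv_zero_relations_of_eventuallyEq {D w : ℂ → ℂ} {C K : ℂ} (hD : AnalyticAt ℂ D 0)
    (hw : AnalyticAt ℂ w 0) (hD0 : D 0 = 1) (hw0 : w 0 = 0)
    (h : (fun z => C * (z * deriv D z * (1 - w z))) =ᶠ[𝓝 0] fun z => K * (D z * w z)) :
    C * deriv D 0 = K * deriv w 0 ∧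
      C * (iteratedDeriv 2 D 0 - deriv D 0 * deriv w 0) =
        K * (deriv D 0 * deriv w 0 + iteratedDeriv 2 w 0 / 2) := by
  have hu (n : ℕ) : ContDiffAt ℂ n (fun z => z * deriv D z) 0 := by
    have := hD.deriv.contDiffAt (n := n); fun_prop
  have hv (n : ℕ) : ContDiffAt ℂ n (fun z => 1 - w z) 0 := by
    have := hw.contDiffAt (n := n); fun_prop
  have e1 := h.iteratedDeriv_eq 1
  have e2 := h.iteratedDeriv_eq 2
  rw [iteratedDeriv_const_mul_field, iteratedDeriv_const_mul_field,
    iteratedDeriv_fun_mul (hu _) (hv _), iteratedDeriv_fun_mul hD.contDiffAt hw.contDiffAt] at e1 e2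
  simp only [Nat.reduceAdd, iteratedDeriv_id_mul_deriv_zero hD, Finset.sum_range_succ,
    Finset.range_one, Finset.sum_singleton, Nat.choose_succ_self_right, zero_add, Nat.cast_one,
    CharP.cast_eq_zero, iteratedDeriv_zero, hD0, mul_one, mul_zero, tsub_zero, Order.lt_one_iff,
    iteratedDeriv_const_sub, iteratedDeriv_neg, iteratedDeriv_one, mul_neg, zero_mul, neg_zero,
    Nat.choose_self, one_mul, tsub_self, hw0, sub_zero, add_zero, Nat.choose_zero_right,
    Order.lt_two_iff, zero_le, Nat.cast_ofNat, Nat.add_one_sub_one] at e1 e2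
  exact ⟨e1, by linear_combination e2 / 2⟩

lemma hasFPowerSeriesOnBall_ofScalars_of_hasSum {f : ℂ → ℂ} {c : ℕ → ℂ} {r : NNReal}
    (hr : 0 < r) (h : ∀ z ∈ ball (0 : ℂ) r, HasSum (fun n => c n * z ^ n) (f z)) :
    HasFPowerSeriesOnBall f (ofScalars ℂ c) 0 r where
  r_le := by
    refine ENNReal.le_of_forall_nnreal_lt fun ρ hρ => ?_
    have hρr : (ρ : ℂ) ∈ ball (0 : ℂ) r := by simpa using hρ
    refine le_radius_of_tendsto _ (l := 0) ?_
    convert tendsto_zero_iff_norm_tendsto_zero.mp (h _ hρr).summable.tendsto_atTop_zero using 2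
    simp
  r_pos := by simpa using hr
  hasSum := fun {y} hy => by
    simpa [ofScalars_apply_eq, mul_comm] using h y (by simpa using hy)

lemma HasFPowerSeriesOnBall.iteratedDeriv_eq_factorial_mul {f : ℂ → ℂ} {c : ℕ → ℂ} {x : ℂ}
    {r : ENNReal} (h : HasFPowerSeriesOnBall f (ofScalars ℂ c) x r) (n : ℕ) :
    iteratedDeriv n f x = n.factorial * c n := by
  have := h.factorial_smul 1 n
  rw [ofScalars_apply_eq, one_pow, smul_eq_mul, mul_one] at this
  rw [iteratedDeriv_eq_iteratedFDeriv, ← this, nsmul_eq_mul]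

lemma hasSum_qDifference_div {A : ℕ → ℂ} {q z s t : ℂ} (hq : q ≠ 1) (hz : z ≠ 0)
    (hs : HasSum (fun n => A n * z ^ n) s) (ht : HasSum (fun n => A n * (q * z) ^ n) t) :
    HasSum (fun n => (1 - q ^ (n + 1)) / (1 - q) * A (n + 1) * z ^ n)
      ((s - t) / ((1 - q) * z)) := by
  have hq' : 1 - q ≠ 0 := sub_ne_zero.mpr hq.symm
  have hshift := (hasSum_nat_add_iff' 1).mpr (hs.sub ht)
  simp only [Finset.range_one, Finset.sum_singleton, pow_zero, sub_self, sub_zero] at hshift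
  have hterm : (fun n => (1 - q ^ (n + 1)) / (1 - q) * A (n + 1) * z ^ n) =
      fun n => (A (n + 1) * z ^ (n + 1) - A (n + 1) * (q * z) ^ (n + 1)) * ((1 - q) * z)⁻¹ := by
    funext n
    rw [mul_pow]
    field_simp
    ring
  rw [hterm, div_eq_mul_inv]
  exact hshift.mul_right _

lemma hasSum_jacksonDeriv {A : ℕ → ℂ} {F D : ℂ → ℂ} {q z : ℂ} (hq : ‖q‖ ≤ 1) (hq1 : q ≠ 1)
    (hF : ∀ z ∈ ball (0 : ℂ) 1, HasSum (fun n => A n * z ^ n) (F z))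
    (hD0 : D 0 = A 1) (hD : ∀ z ≠ 0, D z = (F z - F (q * z)) / ((1 - q) * z))
    (hz : z ∈ ball (0 : ℂ) 1) :
    HasSum (fun n => (1 - q ^ (n + 1)) / (1 - q) * A (n + 1) * z ^ n) (D z) := by
  rcases eq_or_ne z 0 with rfl | hz0
  · rw [hD0]
    convert hasSum_single (f := fun n => (1 - q ^ (n + 1)) / (1 - q) * A (n + 1) * 0 ^ n) 0
      (fun n hn => by simp [hn]) using 1
    simp [sub_ne_zero.mpr hq1.symm]
  · have hqz : q * z ∈ ball (0 : ℂ) 1 := by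
      rw [mem_ball_zero_iff, norm_mul]
      exact (mul_le_of_le_one_left (norm_nonneg z) hq).trans_lt (mem_ball_zero_iff.mp hz)
    rw [hD z hz0]
    exact hasSum_qDifference_div hq1 hz0 (hF z hz) (hF _ hqz)

lemma hasFPowerSeriesOnBall_jacksonDeriv {A : ℕ → ℂ} {F D : ℂ → ℂ} {q : ℂ} (hq : ‖q‖ ≤ 1)
    (hq1 : q ≠ 1) (hF : ∀ z ∈ ball (0 : ℂ) 1, HasSum (fun n => A n * z ^ n) (F z))
    (hD0 : D 0 = A 1) (hD : ∀ z ≠ 0, D z = (F z - F (q * z)) / ((1 - q) * z)) :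
    HasFPowerSeriesOnBall D (ofScalars ℂ fun n => (1 - q ^ (n + 1)) / (1 - q) * A (n + 1)) 0 1 :=
  hasFPowerSeriesOnBall_ofScalars_of_hasSum one_pos fun _ hz =>
    hasSum_jacksonDeriv hq hq1 hF hD0 hD hz

lemma one_sub_pow_div_one_sub_pos {q : ℝ} (hq0 : 0 ≤ q) (hq1 : q < 1) {n : ℕ} (hn : n ≠ 0) :
    0 < (1 - q ^ n) / (1 - q) :=
  div_pos (sub_pos.mpr (pow_lt_one₀ hq0 hq1 hn)) (sub_pos.mpr hq1)

lemma mul_deriv_mul_one_sub_eq_of_subordination {D w : ℂ → ℂ} {z b ϱ α : ℂ} (hb : b ≠ 0)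
    (hD : DifferentiableAt ℂ D z) (hDz : D z ≠ 0) (hwz : w z ≠ 1)
    (h : 1 + (1 / b) * (ϱ * (deriv (fun u => u * D u) z / D z) - ϱ) =
      (1 + (1 - 2 * α) * w z) / (1 - w z)) :
    ϱ * (z * deriv D z * (1 - w z)) = 2 * b * (1 - α) * (D z * w z) := by
  rw [deriv_fun_mul differentiableAt_fun_id hD, deriv_id''] at h
  have hwz' : 1 - w z ≠ 0 := sub_ne_zero.mpr hwz.symm
  field_simp at h
  linear_combination h

lemma fekete_szego_functional_eq {C K d₁ d₂ c₁ c₂ a₂ a₃ Q₂ Q₃ μ : ℂ} (hC : C ≠ 0)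
    (hQ₂ : Q₂ ≠ 0) (hQ₃ : Q₃ ≠ 0) (h₁ : C * d₁ = K * c₁)
    (h₂ : C * (d₂ - d₁ * c₁) = K * (d₁ * c₁ + c₂))
    (ha₂ : Q₂ * a₂ = -3 * d₁) (ha₃ : Q₃ * a₃ = 5 * d₂) :
    a₃ - μ * a₂ ^ 2 =
      5 * K / (C * Q₃) *
        (c₂ + (1 + K * (5 * Q₂ ^ 2 - 9 * μ * Q₃) / (5 * C * Q₂ ^ 2)) * c₁ ^ 2) := by
  have ha₂' : a₂ = -3 * K * c₁ / (C * Q₂) := by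
    field_simp
    linear_combination C * ha₂ - 3 * h₁
  have ha₃' : a₃ = 5 * (C * K * c₂ + K * (K + C) * c₁ ^ 2) / (C ^ 2 * Q₃) := by
    field_simp
    linear_combination C ^ 2 * ha₃ + 5 * C * h₂ + 5 * (K + C) * c₁ * h₁
  rw [ha₂', ha₃']
  field_simp
  ring

theorem convex_fekete_szego_bound_alpha_general
    (q : ℝ) (hq0 : 0 < q) (hq1 : q < 1)
    (a : ℕ → ℂ) (ha1 : a 1 = 1)
    (F DqF : ℂ → ℂ)
    (hF : ∀ z ∈ Metric.ball (0 : ℂ) 1,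
      HasSum (fun n : ℕ =>
        (-1 : ℂ) ^ (n - 1) * a n / (((2 * n - 1 : ℕ) : ℂ) * ((n - 1).factorial : ℂ)) * z ^ n)
        (F z))
    (hDq0 : DqF 0 = 1)
    (hDqF : ∀ z : ℂ, z ≠ 0 → DqF z = (F z - F ((q : ℂ) * z)) / ((1 - (q : ℂ)) * z))
    (Q2 Q3 : ℝ)
    (hQ2 : Q2 = (1 - q ^ 2) / (1 - q))
    (hQ3 : Q3 = (1 - q ^ 3) / (1 - q))
    (w : ℂ → ℂ)
    (hw : AnalyticOnNhd ℂ w (Metric.ball (0 : ℂ) 1))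
    (hw0 : w 0 = 0)
    (hwb : ∀ z ∈ Metric.ball (0 : ℂ) 1, ‖w z‖ < 1)
    (β : ℝ)
    (ϱ : ℂ) (hϱ : ϱ = 1 + Complex.I * (Real.tan β : ℂ))
    (b : ℂ) (hb : b ≠ 0)
    (α : ℝ) (hα1 : α < 1)
    (hDne : ∀ z ∈ Metric.ball (0 : ℂ) 1, DqF z ≠ 0)
    (hsub : ∀ z ∈ Metric.ball (0 : ℂ) 1,
      1 + (1 / b) * (ϱ * (deriv (fun u => u * DqF u) z / DqF z) - ϱ)
        = (1 + (1 - 2 * (α : ℂ)) * w z) / (1 - w z))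
    :
    ∀ μ : ℂ, ‖a 3 - μ * (a 2) ^ 2‖ ≤
      (10 * ‖b‖ * (1 - α) / (‖ϱ‖ * Q3)) *
        max 1 (‖1 +
          2 * b * (1 - (α : ℂ)) * (5 * (Q2 : ℂ) ^ 2 - 9 * μ * (Q3 : ℂ)) / (5 * ϱ * (Q2 : ℂ) ^ 2)‖) := by
  intro μ
  have hQ2pos : 0 < Q2 := hQ2 ▸ one_sub_pow_div_one_sub_pos hq0.le hq1 two_ne_zero
  have hQ3pos : 0 < Q3 := hQ3 ▸ one_sub_pow_div_one_sub_pos hq0.le hq1 three_ne_zero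
  have hϱ0 : ϱ ≠ 0 := fun h => by simpa [h] using congrArg re hϱ
  have hD := hasFPowerSeriesOnBall_jacksonDeriv (q := q) (by simp [abs_of_pos hq0, hq1.le])
    (by exact_mod_cast hq1.ne) hF (by simp [hDq0, ha1]) hDqF
  have hkey : (fun z => ϱ * (z * deriv DqF z * (1 - w z))) =ᶠ[𝓝 0]
      fun z => 2 * b * (1 - α) * (DqF z * w z) := by
    filter_upwards [ball_mem_nhds (0 : ℂ) one_pos] with z hz
    exact mul_deriv_mul_one_sub_eq_of_subordination hb
      (hD.analyticAt_of_mem (by rwa [← ENNReal.ofReal_one, eball_ofReal])).differentiableAt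
      (hDne z hz) (fun h => by simpa [h] using hwb z hz) (hsub z hz)
  obtain ⟨h₁, h₂⟩ := deriv_zero_relations_of_eventuallyEq hD.analyticAt
    (hw 0 (mem_ball_self one_pos)) hDq0 hw0 hkey
  have ha₂ : (Q2 : ℂ) * a 2 = -3 * deriv DqF 0 := by
    rw [← iteratedDeriv_one, hD.iteratedDeriv_eq_factorial_mul, hQ2]; push_cast; ring
  have ha₃ : (Q3 : ℂ) * a 3 = 5 * iteratedDeriv 2 DqF 0 := by
    rw [hD.iteratedDeriv_eq_factorial_mul, hQ3]; push_cast; ring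
  have h1α : ‖(1 : ℂ) - α‖ = 1 - α := by
    rw [← ofReal_one, ← ofReal_sub, norm_real, Real.norm_of_nonneg (by linarith)]
  rw [fekete_szego_functional_eq hϱ0 (by exact_mod_cast hQ2pos.ne')
    (by exact_mod_cast hQ3pos.ne') h₁ h₂ ha₂ ha₃, norm_mul]
  simp only [norm_div, norm_mul, h1α, norm_real, Real.norm_of_nonneg hQ3pos.le, Complex.norm_ofNat]
  rw [show 5 * (2 * ‖b‖ * (1 - α)) = 10 * ‖b‖ * (1 - α) by ring]
  gcongr
  exact norm_iteratedDeriv_two_div_two_add_mul_deriv_sq_le hw.differentiableOn hw0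
    (fun z hz => mem_ball_zero_iff.mpr (hwb z hz)) _

theorem convex_fekete_szego_bound_alpha
    (q : ℝ) (hq0 : 0 < q) (hq1 : q < 1)
    (a : ℕ → ℂ) (ha0 : a 0 = 0) (ha1 : a 1 = 1)
    (f F DqF : ℂ → ℂ)
    (hf : ∀ z ∈ Metric.ball (0 : ℂ) 1, HasSum (fun n : ℕ => a n * z ^ n) (f z))
    (hF : ∀ z ∈ Metric.ball (0 : ℂ) 1,
      HasSum (fun n : ℕ =>
        (-1 : ℂ) ^ (n - 1) * a n / (((2 * n - 1 : ℕ) : ℂ) * ((n - 1).factorial : ℂ)) * z ^ n)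
        (F z))
    (hDq0 : DqF 0 = 1)
    (hDqF : ∀ z : ℂ, z ≠ 0 → DqF z = (F z - F ((q : ℂ) * z)) / ((1 - (q : ℂ)) * z))
    (Q2 Q3 : ℝ)
    (hQ2 : Q2 = (1 - q ^ 2) / (1 - q))
    (hQ3 : Q3 = (1 - q ^ 3) / (1 - q))
    (w : ℂ → ℂ)
    (hw : AnalyticOnNhd ℂ w (Metric.ball (0 : ℂ) 1))
    (hw0 : w 0 = 0)
    (hwb : ∀ z ∈ Metric.ball (0 : ℂ) 1, ‖w z‖ < 1)
    (β : ℝ) (hβ1 : -(Real.pi / 2) < β) (hβ2 : β < Real.pi / 2)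
    (ϱ : ℂ) (hϱ : ϱ = 1 + Complex.I * (Real.tan β : ℂ))
    (b : ℂ) (hb : b ≠ 0)
    (α : ℝ) (hα0 : 0 ≤ α) (hα1 : α < 1)
    (hDne : ∀ z ∈ Metric.ball (0 : ℂ) 1, DqF z ≠ 0)
    (hsub : ∀ z ∈ Metric.ball (0 : ℂ) 1,
      1 + (1 / b) * (ϱ * (deriv (fun u => u * DqF u) z / DqF z) - ϱ)
        = (1 + (1 - 2 * (α : ℂ)) * w z) / (1 - w z))
    :
    ∀ μ : ℂ, ‖a 3 - μ * (a 2) ^ 2‖ ≤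
      (10 * ‖b‖ * (1 - α) / (‖ϱ‖ * Q3)) *
        max 1 (‖1 +
          2 * b * (1 - (α : ℂ)) * (5 * (Q2 : ℂ) ^ 2 - 9 * μ * (Q3 : ℂ)) / (5 * ϱ * (Q2 : ℂ) ^ 2)‖) :=
  convex_fekete_szego_bound_alpha_general q hq0 hq1 a ha1 F DqF hF hDq0 hDqF Q2 Q3 hQ2 hQ3 w hw hw0
    hwb β ϱ hϱ b hb α hα1 hDne hsub
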